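/- Define the correlation λ_g(u,v) = 2^{-d1} Σ_{x ∈ F_2^{d1}} (−1)^{v·g(x) + u·x} for g : F_2^{d1} → F_2^{d2}. For F(x) = T(x + Bᵀ f(Ax)) with A Bᵀ = 0, T invertible, A full rank with right inverse R_A: if α + Tᵀβ ∉ rowspace(A) then λ_F(α, β) = 0, and if α + Tᵀβ ∈ rowspace(A) then λ_F(α, β) = λ_f(R_Aᵀ(α + Tᵀβ), B Tᵀ β). -/

import Mathlib

open Matrix

/-- Sign character of F_2. -/
noncomputable def chi (b : ZMod 2) : ℝ := if b = 0 then 1 else -1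

/-- Linear correlation of a vectorial boolean function. -/
noncomputable def corr {d1 d2 : ℕ} (g : (Fin d1 → ZMod 2) → (Fin d2 → ZMod 2))
    (u : Fin d1 → ZMod 2) (v : Fin d2 → ZMod 2) : ℝ :=
  (∑ x : Fin d1 → ZMod 2, chi (dotProduct v (g x) + dotProduct u x)) / 2 ^ d1

/-!
Write the summand of `corr F α β` as `chi (w ⬝ᵥ f (A x) + γ ⬝ᵥ x)` with `γ = α + Tᵀ β` and
`w = B Tᵀ β`. If `γ` is not in the row space of `A`, then `γ ⬝ᵥ k = 1` for some `k ∈ ker A`, and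
the shift `x ↦ x + k` negates the summand, so the sum vanishes. If `γ = Aᵀ a`, the summand is a
function of `A x` alone, and since `A` is surjective, averaging it over `x` is averaging it over
`A x`; finally `R_Aᵀ Aᵀ a = (A R_A)ᵀ a = a`.
-/

lemma chi_add (a b : ZMod 2) : chi (a + b) = chi a * chi b := by
  have h01 : ∀ c : ZMod 2, c = 0 ∨ c = 1 := by decide
  rcases h01 a with rfl | rfl <;> rcases h01 b with rfl | rfl <;>
    simp [chi, show (1 : ZMod 2) + 1 = 0 from rfl]

lemma chi_of_ne_zero {b : ZMod 2} (hb : b ≠ 0) : chi b = -1 := if_neg hb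

lemma Fintype.sum_eq_zero_of_map_add_eq_neg {G M : Type*} [AddGroup G] [Fintype G]
    [AddCommGroup M] [IsAddTorsionFree M] {h : G → M} (c : G) (hc : ∀ x, h (x + c) = -h x) :
    ∑ x, h x = 0 := by
  rw [← self_eq_neg]
  calc ∑ x, h x = ∑ x, h (x + c) := (Equiv.sum_comp (Equiv.addRight c) h).symm
    _ = -∑ x, h x := by simp only [hc, Finset.sum_neg_distrib]

/-- Shifting `x` by a preimage of `y` gives `∑ x, G (φ x) = ∑ x, G (φ x + y)`; average over `y`. -/
lemma AddMonoidHom.card_nsmul_sum_comp {V W M : Type*} [AddGroup V] [AddGroup W] [Fintype V]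
    [Fintype W] [AddCommMonoid M] (φ : V →+ W) (hφ : Function.Surjective φ) (G : W → M) :
    Fintype.card W • ∑ x, G (φ x) = Fintype.card V • ∑ y, G y := by
  choose s hs using hφ
  have shift (y : W) : ∑ x, G (φ x) = ∑ x, G (φ x + y) := by
    rw [← Equiv.sum_comp (Equiv.addRight (s y))]
    simp only [Equiv.coe_addRight, map_add, hs]
  calc Fintype.card W • ∑ x, G (φ x) = ∑ y : W, ∑ x, G (φ x + y) := by
        simp only [← shift, Finset.sum_const, Finset.card_univ]
    _ = ∑ x : V, ∑ y, G (φ x + y) := Finset.sum_comm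
    _ = ∑ x : V, ∑ y, G y := by
        congr! 1 with x
        exact Equiv.sum_comp (Equiv.addLeft (φ x)) G
    _ = Fintype.card V • ∑ y, G y := by simp only [Finset.sum_const, Finset.card_univ]

lemma Matrix.exists_mulVec_eq_zero_dotProduct_ne_zero {R m n : Type*} [CommRing R] [Fintype m]
    [Fintype n] [DecidableEq m] {A : Matrix m n R} {RA : Matrix n m R} (hRA : A * RA = 1)
    {γ : n → R} (hγ : γ ∉ Set.range Aᵀ.mulVec) : ∃ k, A *ᵥ k = 0 ∧ γ ⬝ᵥ k ≠ 0 := by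
  by_contra! h
  refine hγ ⟨RAᵀ *ᵥ γ, dotProduct_eq _ _ fun x => ?_⟩
  have hker : A *ᵥ (x - RA *ᵥ (A *ᵥ x)) = 0 := by
    rw [mulVec_sub, mulVec_mulVec, hRA, one_mulVec, sub_self]
  have hγx : γ ⬝ᵥ x = γ ⬝ᵥ RA *ᵥ (A *ᵥ x) := by
    rw [← sub_eq_zero, ← dotProduct_sub, h _ hker]
  rw [hγx, dotProduct_comm, dotProduct_transpose_mulVec, dotProduct_comm,
    dotProduct_transpose_mulVec]

section Correlation

variable {d d1 : ℕ}

lemma sum_chi_add_dotProduct_eq_zero (A : Matrix (Fin d1) (Fin d) (ZMod 2))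
    (g : (Fin d1 → ZMod 2) → ZMod 2) {γ k : Fin d → ZMod 2} (hk : A *ᵥ k = 0)
    (hγk : γ ⬝ᵥ k ≠ 0) : ∑ x, chi (g (A *ᵥ x) + γ ⬝ᵥ x) = 0 :=
  Fintype.sum_eq_zero_of_map_add_eq_neg k fun x => by
    rw [mulVec_add, hk, add_zero, dotProduct_add, ← add_assoc, chi_add, chi_of_ne_zero hγk,
      mul_neg_one]

lemma sum_comp_mulVec_div_two_pow {A : Matrix (Fin d1) (Fin d) (ZMod 2)}
    {RA : Matrix (Fin d) (Fin d1) (ZMod 2)} (hRA : A * RA = 1) (G : (Fin d1 → ZMod 2) → ℝ) :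
    (∑ x, G (A *ᵥ x)) / 2 ^ d = (∑ y, G y) / 2 ^ d1 := by
  have hA : Function.Surjective A.mulVecLin := fun y =>
    ⟨RA *ᵥ y, by rw [mulVecLin_apply, mulVec_mulVec, hRA, one_mulVec]⟩
  have h := A.mulVecLin.toAddMonoidHom.card_nsmul_sum_comp hA G
  simp only [LinearMap.toAddMonoidHom_coe, mulVecLin_apply, Fintype.card_fun, ZMod.card,
    Fintype.card_fin, nsmul_eq_mul, Nat.cast_pow, Nat.cast_ofNat] at h
  rw [div_eq_div_iff (by positivity) (by positivity)]
  linear_combination h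

end Correlation

theorem corr_reduction_general (n N Ni No : ℕ)
    (f : (Fin (Ni * n) → ZMod 2) → (Fin (No * n) → ZMod 2))
    (T : Matrix (Fin (N * n)) (Fin (N * n)) (ZMod 2))
    (A : Matrix (Fin (Ni * n)) (Fin (N * n)) (ZMod 2))
    (B : Matrix (Fin (No * n)) (Fin (N * n)) (ZMod 2))
    (RA : Matrix (Fin (N * n)) (Fin (Ni * n)) (ZMod 2))
    (hRA : A * RA = 1)
    (α β : Fin (N * n) → ZMod 2) :
    (α + Tᵀ.mulVec β ∉ Set.range Aᵀ.mulVec →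
      corr (fun x : Fin (N * n) → ZMod 2 => T.mulVec (x + Bᵀ.mulVec (f (A.mulVec x)))) α β
        = 0) ∧
    (α + Tᵀ.mulVec β ∈ Set.range Aᵀ.mulVec →
      corr (fun x : Fin (N * n) → ZMod 2 => T.mulVec (x + Bᵀ.mulVec (f (A.mulVec x)))) α β
        = corr f (RAᵀ.mulVec (α + Tᵀ.mulVec β)) (B.mulVec (Tᵀ.mulVec β))) := by
  set γ := α + Tᵀ *ᵥ β
  set w := B *ᵥ (Tᵀ *ᵥ β)
  have hsummand (x : Fin (N * n) → ZMod 2) :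
      β ⬝ᵥ T *ᵥ (x + Bᵀ *ᵥ f (A *ᵥ x)) + α ⬝ᵥ x = w ⬝ᵥ f (A *ᵥ x) + γ ⬝ᵥ x := by
    rw [dotProduct_mulVec, ← mulVec_transpose, dotProduct_add, dotProduct_transpose_mulVec,
      dotProduct_comm (f _), add_dotProduct]
    ring
  simp only [corr, hsummand]
  refine ⟨fun hγ => ?_, fun ⟨a, ha⟩ => ?_⟩
  · obtain ⟨k, hk, hγk⟩ := exists_mulVec_eq_zero_dotProduct_ne_zero hRA hγ
    rw [sum_chi_add_dotProduct_eq_zero A (w ⬝ᵥ f ·) hk hγk, zero_div]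
  · have hRAa : RAᵀ *ᵥ γ = a := by
      rw [← ha, mulVec_mulVec, ← transpose_mul, hRA, transpose_one, one_mulVec]
    rw [hRAa]
    simp only [← ha, dotProduct_comm (Aᵀ *ᵥ a), dotProduct_transpose_mulVec]
    exact sum_comp_mulVec_div_two_pow hRA fun y => chi (w ⬝ᵥ f y + a ⬝ᵥ y)

/-- the correlations of F vanish off the row space of A, and otherwise
reduce to correlations of f. -/
theorem corr_reduction (n N Ni No : ℕ)
    (f : (Fin (Ni * n) → ZMod 2) → (Fin (No * n) → ZMod 2))
    (T Tinv : Matrix (Fin (N * n)) (Fin (N * n)) (ZMod 2))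
    (hT : T * Tinv = 1) (hT' : Tinv * T = 1)
    (A : Matrix (Fin (Ni * n)) (Fin (N * n)) (ZMod 2))
    (B : Matrix (Fin (No * n)) (Fin (N * n)) (ZMod 2))
    (hA : A.rank = Ni * n)
    (hperp : A * Bᵀ = 0)
    (RA : Matrix (Fin (N * n)) (Fin (Ni * n)) (ZMod 2))
    (hRA : A * RA = 1)
    (α β : Fin (N * n) → ZMod 2) :
    (α + Tᵀ.mulVec β ∉ Set.range Aᵀ.mulVec →
      corr (fun x : Fin (N * n) → ZMod 2 => T.mulVec (x + Bᵀ.mulVec (f (A.mulVec x)))) α β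
        = 0) ∧
    (α + Tᵀ.mulVec β ∈ Set.range Aᵀ.mulVec →
      corr (fun x : Fin (N * n) → ZMod 2 => T.mulVec (x + Bᵀ.mulVec (f (A.mulVec x)))) α β
        = corr f (RAᵀ.mulVec (α + Tᵀ.mulVec β)) (B.mulVec (Tᵀ.mulVec β))) :=
  corr_reduction_general n N Ni No f T A B RA hRA α β
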